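/- Let 0 < α < 1 and let (a_n)_{n≥2} and (b_n)_{n≥1} be complex numbers satisfying Σ_{n=2}^∞ A_n(α)|a_n| + Σ_{n=1}^∞ B_n(α)|b_n| ≤ 2·sin(πα/2). Then Σ_{n=2}^∞ n|a_n| + Σ_{n=1}^∞ n|b_n| < 1. -/

import Mathlib

/-- `A_n(α) = n - 1 + √(n² - 2n cos(πα) + 1)`. -/
noncomputable def Acoef (n : ℕ) (α : ℝ) : ℝ :=
  (n : ℝ) - 1 + Real.sqrt ((n : ℝ) ^ 2 - 2 * n * Real.cos (Real.pi * α) + 1)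

/-- `B_n(α) = n + 1 + √(n² + 2n cos(πα) + 1)`. -/
noncomputable def Bcoef (n : ℕ) (α : ℝ) : ℝ :=
  (n : ℝ) + 1 + Real.sqrt ((n : ℝ) ^ 2 + 2 * n * Real.cos (Real.pi * α) + 1)

lemma keyA (s : ℝ) (hs0 : 0 < s) (hs1 : s < 1) (n : ℕ) (hn : 2 ≤ n) :
    2 * s * n < (n : ℝ) - 1 + Real.sqrt (((n : ℝ) - 1) ^ 2 + 4 * n * s ^ 2) := by
  have hn2 : (2 : ℝ) ≤ n := by exact_mod_cast hn
  rcases le_or_gt (2 * s * n - ((n : ℝ) - 1)) 0 with h | h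
  · have : 0 < Real.sqrt (((n : ℝ) - 1) ^ 2 + 4 * n * s ^ 2) :=
      Real.sqrt_pos.mpr (by nlinarith)
    linarith
  · have h2 : 2 * s * n - ((n : ℝ) - 1) < Real.sqrt (((n : ℝ) - 1) ^ 2 + 4 * n * s ^ 2) := by
      have hiff := Real.lt_sqrt (x := 2 * s * n - ((n : ℝ) - 1)) h.le
        (y := ((n : ℝ) - 1) ^ 2 + 4 * n * s ^ 2)
      rw [hiff]
      have hfact : 0 < 4 * s * (n : ℝ) * ((n : ℝ) - 1) * (1 - s) := by
        have h1 : (0:ℝ) < (n:ℝ) - 1 := by linarith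
        have h2 : (0:ℝ) < 1 - s := by linarith
        positivity
      nlinarith [hfact]
    linarith

lemma keyB (s : ℝ) (hs0 : 0 < s) (hs1 : s < 1) (n : ℕ) (hn : 1 ≤ n) :
    2 * s * n < (n : ℝ) + 1 + Real.sqrt (((n : ℝ) + 1) ^ 2 - 4 * n * s ^ 2) := by
  have hn2 : (1 : ℝ) ≤ n := by exact_mod_cast hn
  have hsq1 : s ^ 2 < 1 := by nlinarith
  rcases le_or_gt (2 * s * n - ((n : ℝ) + 1)) 0 with h | h
  · have : 0 < Real.sqrt (((n : ℝ) + 1) ^ 2 - 4 * n * s ^ 2) :=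
      Real.sqrt_pos.mpr (by nlinarith [sq_nonneg ((n:ℝ) - 1)])
    linarith
  · have h2 : 2 * s * n - ((n : ℝ) + 1) < Real.sqrt (((n : ℝ) + 1) ^ 2 - 4 * n * s ^ 2) := by
      have hiff := Real.lt_sqrt (x := 2 * s * n - ((n : ℝ) + 1)) h.le
        (y := ((n : ℝ) + 1) ^ 2 - 4 * n * s ^ 2)
      rw [hiff]
      have hfact : 0 < 4 * s * (n : ℝ) * ((n : ℝ) + 1) * (1 - s) := by
        have h1 : (0:ℝ) < (n:ℝ) := by linarith
        have h2 : (0:ℝ) < 1 - s := by linarith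
        positivity
      nlinarith [hfact]
    linarith

set_option maxHeartbeats 1000000 in
/-- If `Σ_{n≥2} A_n(α)|a_n| + Σ_{n≥1} B_n(α)|b_n| ≤ 2 sin(πα/2)`, then
`Σ_{n≥2} n|a_n| + Σ_{n≥1} n|b_n| < 1`. -/
theorem stmt11 (α : ℝ) (hα : 0 < α) (hα1 : α < 1) (a b : ℕ → ℂ)
    (ha0 : a 0 = 0) (ha1 : a 1 = 0) (hb0 : b 0 = 0)
    (hsa : Summable fun n : ℕ => Acoef n α * ‖a n‖)
    (hsb : Summable fun n : ℕ => Bcoef n α * ‖b n‖)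
    (hci : (∑' n : ℕ, Acoef n α * ‖a n‖) + (∑' n : ℕ, Bcoef n α * ‖b n‖) ≤
      2 * Real.sin (Real.pi * α / 2)) :
    (∑' n : ℕ, (n : ℝ) * ‖a n‖) + (∑' n : ℕ, (n : ℝ) * ‖b n‖) < 1 := by
  have hπ := Real.pi_pos
  set θ : ℝ := Real.pi * α with hθdef
  set s : ℝ := Real.sin (θ / 2) with hsdef
  have hθ0 : 0 < θ := by positivity
  have hθπ : θ < Real.pi := by
    have : Real.pi * α < Real.pi * 1 := by
      exact mul_lt_mul_of_pos_left hα1 hπ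
    simpa using this
  have hs0 : 0 < s := Real.sin_pos_of_pos_of_lt_pi (by linarith) (by linarith)
  have hcpos : 0 < Real.cos (θ / 2) :=
    Real.cos_pos_of_mem_Ioo ⟨by linarith, by linarith⟩
  have hsc := Real.sin_sq_add_cos_sq (θ / 2)
  have hs1 : s < 1 := by nlinarith
  have hch : Real.cos θ = 1 - 2 * s ^ 2 := by
    have hc2 := Real.cos_two_mul (θ / 2)
    rw [show 2 * (θ / 2) = θ by ring] at hc2
    nlinarith [hc2, hsc]
  -- rewrite Acoef and Bcoef
  have hAeq : ∀ n : ℕ, Acoef n α = (n : ℝ) - 1 + Real.sqrt (((n : ℝ) - 1) ^ 2 + 4 * n * s ^ 2) := by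
    intro n
    unfold Acoef
    rw [← hθdef, hch, show (n:ℝ) ^ 2 - 2 * (n:ℝ) * (1 - 2 * s ^ 2) + 1
      = ((n:ℝ) - 1) ^ 2 + 4 * (n:ℝ) * s ^ 2 from by ring]
  have hBeq : ∀ n : ℕ, Bcoef n α = (n : ℝ) + 1 + Real.sqrt (((n : ℝ) + 1) ^ 2 - 4 * n * s ^ 2) := by
    intro n
    unfold Bcoef
    rw [← hθdef, hch, show (n:ℝ) ^ 2 + 2 * (n:ℝ) * (1 - 2 * s ^ 2) + 1
      = ((n:ℝ) + 1) ^ 2 - 4 * (n:ℝ) * s ^ 2 from by ring]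
  -- pointwise bounds
  have hA : ∀ n : ℕ, 2 * s * ((n : ℝ) * ‖a n‖) ≤ Acoef n α * ‖a n‖ := by
    intro n
    rcases eq_or_ne (a n) 0 with h | h
    · simp [h]
    · have hn : 2 ≤ n := by
        rcases n with _ | _ | n
        · exact absurd ha0 h
        · exact absurd ha1 h
        · omega
      have := keyA s hs0 hs1 n hn
      rw [hAeq n, ← mul_assoc]
      have hnorm : 0 < ‖a n‖ := norm_pos_iff.mpr h
      nlinarith
  have hB : ∀ n : ℕ, 2 * s * ((n : ℝ) * ‖b n‖) ≤ Bcoef n α * ‖b n‖ := by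
    intro n
    rcases eq_or_ne (b n) 0 with h | h
    · simp [h]
    · have hn : 1 ≤ n := by
        rcases n with _ | n
        · exact absurd hb0 h
        · omega
      have := keyB s hs0 hs1 n hn
      rw [hBeq n, ← mul_assoc]
      have hnorm : 0 < ‖b n‖ := norm_pos_iff.mpr h
      nlinarith
  -- summability
  have hsa' : Summable fun n : ℕ => 2 * s * ((n : ℝ) * ‖a n‖) := by
    apply Summable.of_nonneg_of_le (fun n => by positivity) hA hsa
  have hsb' : Summable fun n : ℕ => 2 * s * ((n : ℝ) * ‖b n‖) := by
    apply Summable.of_nonneg_of_le (fun n => by positivity) hB hsb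
  have hsa2 : Summable fun n : ℕ => (n : ℝ) * ‖a n‖ := by
    have := hsa'.mul_left (1 / (2 * s))
    refine this.congr fun n => ?_
    rw [← mul_assoc, one_div, inv_mul_cancel₀ (by positivity : (2 * s) ≠ 0), one_mul]
  have hsb2 : Summable fun n : ℕ => (n : ℝ) * ‖b n‖ := by
    have := hsb'.mul_left (1 / (2 * s))
    refine this.congr fun n => ?_
    rw [← mul_assoc, one_div, inv_mul_cancel₀ (by positivity : (2 * s) ≠ 0), one_mul]
  set Sa : ℝ := ∑' n : ℕ, (n : ℝ) * ‖a n‖ with hSa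
  set Sb : ℝ := ∑' n : ℕ, (n : ℝ) * ‖b n‖ with hSb
  have hTa : 2 * s * Sa ≤ ∑' n : ℕ, Acoef n α * ‖a n‖ := by
    rw [hSa, ← tsum_mul_left]
    exact Summable.tsum_le_tsum hA hsa' hsa
  have hTb : 2 * s * Sb ≤ ∑' n : ℕ, Bcoef n α * ‖b n‖ := by
    rw [hSb, ← tsum_mul_left]
    exact Summable.tsum_le_tsum hB hsb' hsb
  -- strictness
  have key : 2 * s * Sa + 2 * s * Sb < 2 * s := by
    by_cases hall : (∀ n, a n = 0) ∧ (∀ n, b n = 0)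
    · have h1 : Sa = (∑' _ : ℕ, (0:ℝ)) := tsum_congr fun n => by simp [hall.1 n]
      have h2 : Sb = (∑' _ : ℕ, (0:ℝ)) := tsum_congr fun n => by simp [hall.2 n]
      rw [tsum_zero] at h1 h2
      rw [h1, h2]; linarith
    · rw [not_and_or] at hall
      rcases hall with h | h
      · push_neg at h
        obtain ⟨j, hj⟩ := h
        have hjn : 2 ≤ j := by
          rcases j with _ | _ | j
          · exact absurd ha0 hj
          · exact absurd ha1 hj
          · omega
        have hstrict : 2 * s * ((j : ℝ) * ‖a j‖) < Acoef j α * ‖a j‖ := by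
          have := keyA s hs0 hs1 j hjn
          rw [hAeq j, ← mul_assoc]
          have hnorm : 0 < ‖a j‖ := norm_pos_iff.mpr hj
          nlinarith
        have hTa' : 2 * s * Sa < ∑' n : ℕ, Acoef n α * ‖a n‖ := by
          rw [hSa, ← tsum_mul_left]
          exact Summable.tsum_lt_tsum hA hstrict hsa' hsa
        linarith [hci]
      · push_neg at h
        obtain ⟨j, hj⟩ := h
        have hjn : 1 ≤ j := by
          rcases j with _ | j
          · exact absurd hb0 hj
          · omega
        have hstrict : 2 * s * ((j : ℝ) * ‖b j‖) < Bcoef j α * ‖b j‖ := by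
          have := keyB s hs0 hs1 j hjn
          rw [hBeq j, ← mul_assoc]
          have hnorm : 0 < ‖b j‖ := norm_pos_iff.mpr hj
          nlinarith
        have hTb' : 2 * s * Sb < ∑' n : ℕ, Bcoef n α * ‖b n‖ := by
          rw [hSb, ← tsum_mul_left]
          exact Summable.tsum_lt_tsum hB hstrict hsb' hsb
        linarith [hci]
  nlinarith [key, hs0]
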